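/- arXiv:1807.05130 — 3 statements merged into one kernel-verified Lean document; each statement's English description precedes it below -/
import Mathlib

section
/- Let (S, +, ·, ≤) be a preordered commutative semiring containing ℕ such that ≤ restricted to ℕ is the usual order and for all nonzero a, b ∈ S there exists r ∈ ℕ with a ≤ r·b. Define the asymptotic preorder a ≲ b iff there exists an integer sequence x_N ∈ o(N) with a^N ≤ 2^{x_N} b^N for all N. Then ≲ is reflexive, transitive, and respects addition and multiplication (a ≲ b and c ≲ d imply a + c ≲ b + d and a·c ≲ b·d). -/
/-!
Asymptotic witnesses compose additively: multiplying `a^N ≤ 2^(x N) b^N` by `c^N ≤ 2^(y N) d^N`,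
or chaining it with `b^N ≤ 2^(y N) c^N`, gives the sublinear exponent `x N + y N`. For sums, expand
`(a + c)^N` binomially; the term `a^k c^(N-k)` is bounded with exponent `x k + y (N - k)`, and after
replacing `x, y` by their running maxima (still sublinear) the single exponent `x N + y N` bounds
every term, so the bounds sum to `2^(x N + y N) (b + d)^N`.
-/

open Filter

/-- The asymptotic preorder associated with a preorder `le` on a commutative semiring. -/
def AsympLe {S : Type*} [CommSemiring S] (le : S → S → Prop) (a b : S) : Prop :=
  ∃ x : ℕ → ℕ, ((fun N => (x N : ℝ)) =o[atTop] fun N => (N : ℝ)) ∧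
    ∀ N : ℕ, le (a ^ N) ((2 : S) ^ (x N) * b ^ N)

open Asymptotics

lemma isLittleO_partialSups_natCast {x : ℕ → ℕ}
    (hx : (fun N => (x N : ℝ)) =o[atTop] fun N => (N : ℝ)) :
    (fun N => (partialSups x N : ℝ)) =o[atTop] fun N => (N : ℝ) := by
  simp only [isLittleO_iff, Real.norm_natCast] at hx ⊢
  intro c hc
  obtain ⟨K, hK⟩ := eventually_atTop.1 (hx hc)
  have hlarge : ∀ᶠ N : ℕ in atTop, (partialSups x K : ℝ) ≤ c * N :=
    (tendsto_natCast_atTop_atTop.const_mul_atTop hc).eventually_ge_atTop _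
  filter_upwards [hlarge, eventually_ge_atTop K] with N hN hKN
  obtain ⟨k, hkN, hk⟩ := exists_partialSups_eq x N
  rw [hk]
  rcases le_total k K with hkK | hKk
  · exact le_trans (by exact_mod_cast le_partialSups_of_le x hkK) hN
  · exact (hK k hKk).trans (by gcongr)

structure IsSemiringPreorder {S : Type*} [CommSemiring S] (le : S → S → Prop) : Prop where
  refl : ∀ a, le a a
  trans : ∀ a b c, le a b → le b c → le a c
  add_le_add : ∀ a b c d, le a b → le c d → le (a + c) (b + d)
  mul_le_mul : ∀ a b c d, le a b → le c d → le (a * c) (b * d)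

namespace IsSemiringPreorder

variable {S : Type*} [CommSemiring S] {le : S → S → Prop}

lemma sum_le_sum (h : IsSemiringPreorder le) {ι : Type*} (s : Finset ι) {f g : ι → S}
    (hfg : ∀ i ∈ s, le (f i) (g i)) : le (∑ i ∈ s, f i) (∑ i ∈ s, g i) := by
  have := Finset.sum_induction (fun i => (f i, g i)) (fun p => le p.1 p.2)
    (fun p q => h.add_le_add p.1 p.2 q.1 q.2) (h.refl 0) hfg
  simpa only [Prod.fst_sum, Prod.snd_sum] using this

lemma two_pow_le_two_pow (hnat : ∀ m n : ℕ, m ≤ n → le (m : S) n) {m n : ℕ} (hmn : m ≤ n) :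
    le ((2 : S) ^ m) ((2 : S) ^ n) := by
  exact_mod_cast hnat _ _ (Nat.pow_le_pow_right two_pos hmn)

lemma le_two_pow_mul_of_le (h : IsSemiringPreorder le) (hnat : ∀ m n : ℕ, m ≤ n → le (m : S) n)
    {a b : S} {m n : ℕ} (hab : le a (2 ^ m * b)) (hmn : m ≤ n) : le a (2 ^ n * b) :=
  h.trans _ _ _ hab (h.mul_le_mul _ _ _ _ (two_pow_le_two_pow hnat hmn) (h.refl b))

lemma mul_le_two_pow_add_mul (h : IsSemiringPreorder le) {a b c d : S} {m n : ℕ}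
    (hab : le a (2 ^ m * b)) (hcd : le c (2 ^ n * d)) : le (a * c) (2 ^ (m + n) * (b * d)) := by
  have := h.mul_le_mul _ _ _ _ hab hcd
  rwa [pow_add, mul_mul_mul_comm]

lemma le_two_pow_add_mul_of_le (h : IsSemiringPreorder le) {a b c : S} {m n : ℕ}
    (hab : le a (2 ^ m * b)) (hbc : le b (2 ^ n * c)) : le a (2 ^ (m + n) * c) := by
  have := h.mul_le_mul _ _ _ _ (h.refl (2 ^ m)) hbc
  rw [pow_add, mul_assoc]
  exact h.trans _ _ _ hab this

end IsSemiringPreorder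

namespace AsympLe

variable {S : Type*} [CommSemiring S] {le : S → S → Prop}

lemma refl (h : IsSemiringPreorder le) (a : S) : AsympLe le a a :=
  ⟨0, by simp, fun N => by simpa using h.refl (a ^ N)⟩

lemma trans (h : IsSemiringPreorder le) {a b c : S} :
    AsympLe le a b → AsympLe le b c → AsympLe le a c := by
  rintro ⟨x, hx, hab⟩ ⟨y, hy, hbc⟩
  exact ⟨fun N => x N + y N, by simpa using hx.add hy,
    fun N => h.le_two_pow_add_mul_of_le (hab N) (hbc N)⟩

lemma mul (h : IsSemiringPreorder le) {a b c d : S} :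
    AsympLe le a b → AsympLe le c d → AsympLe le (a * c) (b * d) := by
  rintro ⟨x, hx, hab⟩ ⟨y, hy, hcd⟩
  refine ⟨fun N => x N + y N, by simpa using hx.add hy, fun N => ?_⟩
  simpa only [mul_pow] using h.mul_le_two_pow_add_mul (hab N) (hcd N)

lemma exists_monotone (h : IsSemiringPreorder le) (hnat : ∀ m n : ℕ, m ≤ n → le (m : S) n)
    {a b : S} (hab : AsympLe le a b) :
    ∃ x : ℕ → ℕ, Monotone x ∧ ((fun N => (x N : ℝ)) =o[atTop] fun N => (N : ℝ)) ∧
      ∀ N : ℕ, le (a ^ N) ((2 : S) ^ (x N) * b ^ N) := by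
  obtain ⟨x, hx, hxab⟩ := hab
  exact ⟨partialSups x, (partialSups x).monotone, isLittleO_partialSups_natCast hx,
    fun N => h.le_two_pow_mul_of_le hnat (hxab N) (le_partialSups x N)⟩

lemma add (h : IsSemiringPreorder le) (hnat : ∀ m n : ℕ, m ≤ n → le (m : S) n) {a b c d : S}
    (hab : AsympLe le a b) (hcd : AsympLe le c d) : AsympLe le (a + c) (b + d) := by
  obtain ⟨x, hxmono, hx, hab⟩ := hab.exists_monotone h hnat
  obtain ⟨y, hymono, hy, hcd⟩ := hcd.exists_monotone h hnat
  refine ⟨fun N => x N + y N, by simpa using hx.add hy, fun N => ?_⟩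
  have hterm : ∀ k ∈ Finset.range (N + 1), le (a ^ k * c ^ (N - k) * N.choose k)
      (2 ^ (x N + y N) * (b ^ k * d ^ (N - k) * N.choose k)) := by
    intro k hk
    have hkN : k ≤ N := Nat.lt_succ_iff.1 (Finset.mem_range.1 hk)
    have hprod := h.le_two_pow_mul_of_le hnat (h.mul_le_two_pow_add_mul (hab k) (hcd (N - k)))
      (add_le_add (hxmono hkN) (hymono (N.sub_le k)))
    rw [← mul_assoc]
    exact h.mul_le_mul _ _ _ _ hprod (h.refl _)
  simpa only [← add_pow, ← Finset.mul_sum] using h.sum_le_sum _ hterm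

end AsympLe

theorem stmt8_general {S : Type*} [CommSemiring S] (le : S → S → Prop)
    (hrefl : ∀ a, le a a)
    (htrans : ∀ a b c, le a b → le b c → le a c)
    (hadd : ∀ a b c d, le a b → le c d → le (a + c) (b + d))
    (hmul : ∀ a b c d, le a b → le c d → le (a * c) (b * d))
    (hnat : ∀ m n : ℕ, le (m : S) (n : S) ↔ m ≤ n) :
    (∀ a : S, AsympLe le a a) ∧
    (∀ a b c : S, AsympLe le a b → AsympLe le b c → AsympLe le a c) ∧
    (∀ a b c d : S, AsympLe le a b → AsympLe le c d →
      AsympLe le (a + c) (b + d) ∧ AsympLe le (a * c) (b * d)) := by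
  have h : IsSemiringPreorder le := ⟨hrefl, htrans, hadd, hmul⟩
  have hnat_mono : ∀ m n : ℕ, m ≤ n → le (m : S) n := fun m n => (hnat m n).2
  exact ⟨AsympLe.refl h, fun _ _ _ => AsympLe.trans h,
    fun _ _ _ _ hab hcd => ⟨hab.add h hnat_mono hcd, hab.mul h hcd⟩⟩

theorem stmt8 {S : Type*} [CommSemiring S] (le : S → S → Prop)
    (hrefl : ∀ a, le a a)
    (htrans : ∀ a b c, le a b → le b c → le a c)
    (hadd : ∀ a b c d, le a b → le c d → le (a + c) (b + d))
    (hmul : ∀ a b c d, le a b → le c d → le (a * c) (b * d))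
    (hnat : ∀ m n : ℕ, le (m : S) (n : S) ↔ m ≤ n)
    (hbound : ∀ a b : S, a ≠ 0 → b ≠ 0 → ∃ r : ℕ, le a ((r : S) * b)) :
    (∀ a : S, AsympLe le a a) ∧
    (∀ a b c : S, AsympLe le a b → AsympLe le b c → AsympLe le a c) ∧
    (∀ a b c d : S, AsympLe le a b → AsympLe le c d →
      AsympLe le (a + c) (b + d) ∧ AsympLe le (a * c) (b * d)) :=
  stmt8_general le hrefl htrans hadd hmul hnat
end

section
/- Let α ∈ (0,1] and let K₁, …, K_r be d×d complex matrices with Σ_i K_i*K_i ≤ I. Then for every complex matrix X, (Tr((X*X)^α))^{1/α} ≥ Σ_{i=1}^r (Tr((X*K_i*K_iX)^α))^{1/α}. -/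
open Matrix ComplexOrder

/-- Trace of the α-th power (via functional calculus / eigenvalues) of a Hermitian matrix. -/
noncomputable def traceRpow {d : ℕ} (A : Matrix (Fin d) (Fin d) ℂ)
    (hA : A.IsHermitian) (α : ℝ) : ℝ :=
  ∑ i, (hA.eigenvalues i) ^ α

/-!
Put `Z = X*X` and `Yᵢ = X*Kᵢ*KᵢX`, so that `0 ≤ Yᵢ` and `∑ Yᵢ ≤ Z`. Let `0 ≤ Y ≤ Z`, and let
`μⱼ, vⱼ` and `aₖ, wₖ` be eigenvalues and eigenvectors of `Z` and `Y`. Averaging the tangent-line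
bound `a^α ≤ α b^(α-1) a + (1-α) b^α` of the concave map `x ↦ x^α` at `a = aₖ`, `b = t μⱼ`
against the doubly stochastic matrix `|⟨vⱼ, wₖ⟩|²` gives, for all `t > 0`,
`Tr Y^α ≤ α t^(α-1) Tr(Z^(α-1) Y) + (1-α) t^α Tr Z^α`.
Optimising in `t`, `(Tr Y^α)^(1/α) ≤ Tr(Z^(α-1) Y) (Tr Z^α)^(1/α-1)`. The right-hand side is
linear in `Y`; summing over `i` and using `Tr(Z^(α-1) ∑ Yᵢ) ≤ Tr(Z^(α-1) Z) = Tr Z^α` concludes.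
-/

open scoped MatrixOrder

namespace Real

theorem rpow_le_tangent {α a b : ℝ} (hα0 : 0 < α) (hα1 : α ≤ 1) (ha : 0 ≤ a) (hb : 0 ≤ b)
    (hab : b = 0 → a = 0) :
    a ^ α ≤ α * b ^ (α - 1) * a + (1 - α) * b ^ α := by
  rcases hb.eq_or_lt with rfl | hb
  · simp [hab rfl, zero_rpow hα0.ne']
  have hbern := rpow_one_add_le_one_add_mul_self (s := a / b - 1)
    (by linarith [div_nonneg ha hb.le]) hα0.le hα1
  rw [add_sub_cancel] at hbern
  calc a ^ α = (a / b) ^ α * b ^ α := by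
        rw [div_rpow ha hb.le, div_mul_cancel₀ _ (by positivity)]
    _ ≤ (1 + α * (a / b - 1)) * b ^ α := by gcongr
    _ = α * b ^ (α - 1) * a + (1 - α) * b ^ α := by
      rw [rpow_sub_one hb.ne']
      field_simp
      ring

/-- The infimum over `t > 0` of `α t^(α-1) s + (1-α) t^α S` is `s^α S^(1-α)`. -/
theorem rpow_one_div_le_of_forall_le {α s S T : ℝ} (hα0 : 0 < α) (hT : 0 ≤ T)
    (hs : 0 ≤ s) (hsS : s ≤ S)
    (hbound : ∀ t > 0, T ≤ α * t ^ (α - 1) * s + (1 - α) * t ^ α * S) :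
    T ^ (1 / α) ≤ s * S ^ (1 / α - 1) := by
  rcases hs.eq_or_lt with rfl | hs
  · suffices T ≤ 0 by simp [le_antisymm this hT, zero_rpow (inv_ne_zero hα0.ne')]
    rcases hsS.eq_or_lt with rfl | hS
    · simpa using hbound 1 one_pos
    by_contra! hT
    have := hbound ((T / S) ^ (1 / α)) (by positivity)
    rw [mul_zero, zero_add, ← rpow_mul (by positivity), one_div_mul_cancel hα0.ne', rpow_one,
      mul_assoc, div_mul_cancel₀ _ hS.ne'] at this
    nlinarith
  have hS : 0 < S := hs.trans_le hsS
  have hT_le : T ≤ s ^ α * S ^ (1 - α) := by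
    refine (hbound (s / S) (by positivity)).trans_eq ?_
    rw [div_rpow hs.le hS.le, div_rpow hs.le hS.le, rpow_sub_one hs.ne', rpow_sub_one hS.ne',
      rpow_sub hS, rpow_one]
    field_simp
    ring
  calc T ^ (1 / α) ≤ (s ^ α * S ^ (1 - α)) ^ (1 / α) := by gcongr
    _ = s * S ^ (1 / α - 1) := by
      rw [mul_rpow (by positivity) (by positivity), ← rpow_mul hs.le, ← rpow_mul hS.le,
        mul_one_div_cancel hα0.ne', rpow_one]
      congr 2
      field_simp

end Real

namespace Matrix

variable {n : Type*} [Fintype n] [DecidableEq n]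

theorem sum_normSq_apply_of_mem_unitaryGroup {U : Matrix n n ℂ} (hU : U ∈ unitaryGroup n ℂ)
    (j : n) : ∑ k, Complex.normSq (U j k) = 1 := by
  have h := congr_fun₂ (mem_unitaryGroup_iff.mp hU) j j
  simp only [mul_apply, star_apply, one_apply_eq, Complex.star_def, Complex.mul_conj] at h
  exact_mod_cast h

theorem sum_normSq_apply_of_mem_unitaryGroup' {U : Matrix n n ℂ} (hU : U ∈ unitaryGroup n ℂ)
    (k : n) : ∑ j, Complex.normSq (U j k) = 1 := by
  simpa using sum_normSq_apply_of_mem_unitaryGroup (Unitary.star_mem hU) k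

namespace IsHermitian

variable {A : Matrix n n ℂ}

theorem re_conjTranspose_mul_mul_apply_self (hA : A.IsHermitian) (V : Matrix n n ℂ) (j : n) :
    ((Vᴴ * A * V) j j).re =
      ∑ k, hA.eigenvalues k * Complex.normSq ((Vᴴ * hA.eigenvectorUnitary) j k) := by
  set W : Matrix n n ℂ := (hA.eigenvectorUnitary : Matrix n n ℂ)
  set D : Matrix n n ℂ := diagonal (RCLike.ofReal ∘ hA.eigenvalues)
  have hconj : Vᴴ * A * V = (Vᴴ * W) * D * (Vᴴ * W)ᴴ := by
    conv_lhs => rw [hA.spectral_theorem, Unitary.conjStarAlgAut_apply]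
    simp only [conjTranspose_mul, conjTranspose_conjTranspose, star_eq_conjTranspose,
      Matrix.mul_assoc, W, D]
  rw [hconj, mul_apply, Complex.re_sum]
  refine Finset.sum_congr rfl fun k _ => ?_
  simp only [D, mul_diagonal, conjTranspose_apply, Function.comp_apply, Complex.star_def]
  rw [mul_comm _ (RCLike.ofReal _), mul_assoc, Complex.mul_conj]
  simp

theorem conjTranspose_eigenvectorUnitary_mul_mul_apply_self (hA : A.IsHermitian) (j : n) :
    ((hA.eigenvectorUnitary : Matrix n n ℂ)ᴴ * A * hA.eigenvectorUnitary) j j =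
      hA.eigenvalues j := by
  have h := hA.conjStarAlgAut_star_eigenvectorUnitary
  rw [Unitary.conjStarAlgAut_apply, Unitary.coe_star, star_star] at h
  simp [← star_eq_conjTranspose, h]

theorem re_conjTranspose_eigenvectorUnitary_mul_mul_apply_le (hA : A.IsHermitian) {B : Matrix n n ℂ}
    (hBA : B ≤ A) (j : n) :
    (((hA.eigenvectorUnitary : Matrix n n ℂ)ᴴ * B * hA.eigenvectorUnitary) j j).re ≤
      hA.eigenvalues j := by
  have h := ((le_iff.mp hBA).conjTranspose_mul_mul_same
    (hA.eigenvectorUnitary : Matrix n n ℂ)).diag_nonneg (i := j)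
  rw [Matrix.mul_sub, Matrix.sub_mul, sub_apply,
    hA.conjTranspose_eigenvectorUnitary_mul_mul_apply_self, sub_nonneg] at h
  simpa using (Complex.le_def.1 h).1

/-- `Tr (A ^ (α - 1) * B)` computed in an eigenbasis of `A`; on `ker A` the weight is the junk
value `0 ^ (α - 1)`, which is harmless when `0 ≤ B ≤ A`. -/
noncomputable def traceRpowSubOneMul (hA : A.IsHermitian) (α : ℝ) (B : Matrix n n ℂ) : ℝ :=
  ∑ j, hA.eigenvalues j ^ (α - 1) *
    (((hA.eigenvectorUnitary : Matrix n n ℂ)ᴴ * B * hA.eigenvectorUnitary) j j).re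

theorem traceRpowSubOneMul_sum (hA : A.IsHermitian) {ι : Type*} [Fintype ι] (α : ℝ)
    (B : ι → Matrix n n ℂ) :
    hA.traceRpowSubOneMul α (∑ i, B i) = ∑ i, hA.traceRpowSubOneMul α (B i) := by
  simp only [traceRpowSubOneMul, Finset.mul_sum, Finset.sum_mul, sum_apply, Complex.re_sum]
  exact Finset.sum_comm

end IsHermitian

theorem PosSemidef.traceRpowSubOneMul_nonneg {A B : Matrix n n ℂ} (hA : A.PosSemidef)
    (hB : B.PosSemidef) (α : ℝ) : 0 ≤ hA.1.traceRpowSubOneMul α B :=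
  Finset.sum_nonneg fun j _ => mul_nonneg (Real.rpow_nonneg (hA.eigenvalues_nonneg j) _)
    (Complex.nonneg_iff.1 (hB.conjTranspose_mul_mul_same _).diag_nonneg).1

end Matrix

theorem traceRpow_nonneg {d : ℕ} {A : Matrix (Fin d) (Fin d) ℂ} (hA : A.PosSemidef) (α : ℝ) :
    0 ≤ traceRpow A hA.1 α :=
  Finset.sum_nonneg fun i _ => Real.rpow_nonneg (hA.eigenvalues_nonneg i) α

theorem traceRpowSubOneMul_le_traceRpow {d : ℕ} {α : ℝ} (hα0 : 0 < α)
    {A B : Matrix (Fin d) (Fin d) ℂ} (hA : A.PosSemidef) (hBA : B ≤ A) :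
    hA.1.traceRpowSubOneMul α B ≤ traceRpow A hA.1 α :=
  Finset.sum_le_sum fun j _ => calc
    _ ≤ hA.1.eigenvalues j ^ (α - 1) * hA.1.eigenvalues j := by
      gcongr
      · exact Real.rpow_nonneg (hA.eigenvalues_nonneg j) _
      · exact hA.1.re_conjTranspose_eigenvectorUnitary_mul_mul_apply_le hBA j
    _ = hA.1.eigenvalues j ^ α := by
      rw [← Real.rpow_add_one' (hA.eigenvalues_nonneg j) (by simp [hα0.ne']), sub_add_cancel]

theorem traceRpow_le_sum_tangent {d : ℕ} {α : ℝ} (hα0 : 0 < α) (hα1 : α ≤ 1)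
    {Y : Matrix (Fin d) (Fin d) ℂ} (hY : Y.PosSemidef)
    {V : Matrix (Fin d) (Fin d) ℂ} (hV : V ∈ unitaryGroup (Fin d) ℂ)
    {b : Fin d → ℝ} (hb : ∀ j, 0 ≤ b j) (hYb : ∀ j, b j = 0 → ((Vᴴ * Y * V) j j).re = 0) :
    traceRpow Y hY.1 α ≤
      ∑ j, (α * b j ^ (α - 1) * ((Vᴴ * Y * V) j j).re + (1 - α) * b j ^ α) := by
  set a := hY.1.eigenvalues
  set N : Matrix (Fin d) (Fin d) ℂ := Vᴴ * hY.1.eigenvectorUnitary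
  set p : Fin d → Fin d → ℝ := fun j k => Complex.normSq (N j k)
  have hN : N ∈ unitaryGroup (Fin d) ℂ :=
    mul_mem (Unitary.star_mem hV) hY.1.eigenvectorUnitary.2
  have hdiag : ∀ j, ((Vᴴ * Y * V) j j).re = ∑ k, a k * p j k :=
    hY.1.re_conjTranspose_mul_mul_apply_self V
  have hterm : ∀ j k,
      p j k * a k ^ α ≤ p j k * (α * b j ^ (α - 1) * a k + (1 - α) * b j ^ α) := by
    intro j k
    rcases (Complex.normSq_nonneg (N j k)).eq_or_lt with hp | hp
    · simp [p, ← hp]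
    refine mul_le_mul_of_nonneg_left
      (Real.rpow_le_tangent hα0 hα1 (hY.eigenvalues_nonneg k) (hb j) fun hbj => ?_) hp.le
    have hzero := (Finset.sum_eq_zero_iff_of_nonneg fun k _ =>
      mul_nonneg (hY.eigenvalues_nonneg k) (Complex.normSq_nonneg (N j k))).1
      ((hdiag j).symm.trans (hYb j hbj)) k (Finset.mem_univ k)
    exact (mul_eq_zero.1 hzero).resolve_right hp.ne'
  calc traceRpow Y hY.1 α = ∑ j, ∑ k, p j k * a k ^ α := by
        rw [Finset.sum_comm]
        simp only [traceRpow, ← Finset.sum_mul, p, sum_normSq_apply_of_mem_unitaryGroup' hN,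
          one_mul]
        rfl
    _ ≤ ∑ j, ∑ k, p j k * (α * b j ^ (α - 1) * a k + (1 - α) * b j ^ α) :=
        Finset.sum_le_sum fun j _ => Finset.sum_le_sum fun k _ => hterm j k
    _ = _ := by
        refine Finset.sum_congr rfl fun j _ => ?_
        simp only [hdiag j, mul_add, Finset.sum_add_distrib, ← Finset.sum_mul, p,
          sum_normSq_apply_of_mem_unitaryGroup hN j, one_mul, Finset.mul_sum]
        congr 1
        exact Finset.sum_congr rfl fun k _ => by ring

theorem rpow_one_div_traceRpow_le {d : ℕ} {α : ℝ} (hα0 : 0 < α) (hα1 : α ≤ 1)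
    {A B : Matrix (Fin d) (Fin d) ℂ} (hA : A.PosSemidef) (hB : B.PosSemidef) (hBA : B ≤ A) :
    traceRpow B hB.1 α ^ (1 / α) ≤
      hA.1.traceRpowSubOneMul α B * traceRpow A hA.1 α ^ (1 / α - 1) := by
  set μ := hA.1.eigenvalues
  set V : Matrix (Fin d) (Fin d) ℂ := (hA.1.eigenvectorUnitary : Matrix (Fin d) (Fin d) ℂ)
  refine Real.rpow_one_div_le_of_forall_le hα0 (traceRpow_nonneg hB α)
    (hA.traceRpowSubOneMul_nonneg hB α) (traceRpowSubOneMul_le_traceRpow hα0 hA hBA)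
    fun t ht => ?_
  refine (traceRpow_le_sum_tangent hα0 hα1 hB hA.1.eigenvectorUnitary.2 (b := fun j => t * μ j)
    (fun j => mul_nonneg ht.le (hA.eigenvalues_nonneg j)) fun j htμ => ?_).trans_eq ?_
  · have hμ : μ j = 0 := (mul_eq_zero.1 htμ).resolve_left ht.ne'
    refine le_antisymm ?_ (Complex.nonneg_iff.1 (hB.conjTranspose_mul_mul_same V).diag_nonneg).1
    exact hμ ▸ hA.1.re_conjTranspose_eigenvectorUnitary_mul_mul_apply_le hBA j
  · simp only [Finset.sum_add_distrib, Finset.mul_sum, IsHermitian.traceRpowSubOneMul, traceRpow]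
    congr 1 <;> refine Finset.sum_congr rfl fun j _ => ?_ <;>
      rw [Real.mul_rpow ht.le (hA.eigenvalues_nonneg j)] <;> ring

theorem stmt13 {d r : ℕ} (α : ℝ) (hα0 : 0 < α) (hα1 : α ≤ 1)
    (K : Fin r → Matrix (Fin d) (Fin d) ℂ)
    (hK : (1 - ∑ i, (K i)ᴴ * K i).PosSemidef)
    (X : Matrix (Fin d) (Fin d) ℂ)
    (hX : (Xᴴ * X).IsHermitian)
    (h : ∀ i, (Xᴴ * (K i)ᴴ * K i * X).IsHermitian) :
    ∑ i, (traceRpow _ (h i) α) ^ (1/α) ≤ (traceRpow _ hX α) ^ (1/α) := by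
  set Y : Fin r → Matrix (Fin d) (Fin d) ℂ := fun i => Xᴴ * (K i)ᴴ * K i * X
  have hZ : (Xᴴ * X).PosSemidef := posSemidef_conjTranspose_mul_self X
  have hY : ∀ i, (Y i).PosSemidef := fun i => by
    simpa only [Y, conjTranspose_mul, Matrix.mul_assoc] using
      posSemidef_conjTranspose_mul_self (K i * X)
  have hYZ : ∑ i, Y i ≤ Xᴴ * X := by
    simpa only [Y, Matrix.mul_sub, Matrix.sub_mul, Matrix.mul_one, Finset.mul_sum,
      Finset.sum_mul, Matrix.mul_assoc, le_iff] using hK.conjTranspose_mul_mul_same X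
  have hYiZ : ∀ i, Y i ≤ Xᴴ * X := fun i =>
    (Finset.single_le_sum (fun i _ => (hY i).nonneg) (Finset.mem_univ i)).trans hYZ
  set S := traceRpow _ hX α
  calc ∑ i, (traceRpow _ (h i) α) ^ (1/α)
      ≤ ∑ i, hZ.1.traceRpowSubOneMul α (Y i) * S ^ (1 / α - 1) :=
        Finset.sum_le_sum fun i _ => rpow_one_div_traceRpow_le hα0 hα1 hZ (hY i) (hYiZ i)
    _ ≤ S * S ^ (1 / α - 1) := by
      rw [← Finset.sum_mul, ← IsHermitian.traceRpowSubOneMul_sum]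
      gcongr
      · exact Real.rpow_nonneg (traceRpow_nonneg hZ α) _
      · exact traceRpowSubOneMul_le_traceRpow hα0 hZ hYZ
    _ = S ^ (1 / α) := by
      rw [← Real.rpow_one_add' (traceRpow_nonneg hZ α) (by simp [hα0.ne']), add_sub_cancel]
end

section
/- Let P be a probability vector on a finite set, t > 0, and define p̃_I = x · min(p_I, t) where x = (Σ_I min(p_I, t))⁻¹, assuming x ≥ 1. Then the distribution P̃ = (p̃_I) is majorized by P, P̃ ≼ P, i.e., Σ_{i=1}^N P̃^↓(i) ≤ Σ_{i=1}^N P^↓(i) for all N. -/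
/-- The entries of `p` rearranged in non-increasing order. -/
noncomputable def sortDesc {d : ℕ} (p : Fin d → ℝ) : Fin d → ℝ :=
  fun i => (p ∘ Tuple.sort p) i.rev

/-- Sum of the `N` largest entries of `p`. -/
noncomputable def topSum {d : ℕ} (p : Fin d → ℝ) (N : ℕ) : ℝ :=
  ∑ i ∈ Finset.univ.filter (fun i : Fin d => (i : ℕ) < N), sortDesc p i

lemma sortDesc_anti {d : ℕ} (p : Fin d → ℝ) : Antitone (sortDesc p) := by
  intro i j hij
  exact Tuple.monotone_sort p (Fin.rev_le_rev.mpr hij)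

lemma sortDesc_sum {d : ℕ} (p : Fin d → ℝ) : ∑ i, sortDesc p i = ∑ i, p i := by
  unfold sortDesc
  exact Equiv.sum_comp ((Fin.revPerm).trans (Tuple.sort p)) p

lemma sortDesc_comp_mono {d : ℕ} (p : Fin d → ℝ) (f : ℝ → ℝ) (hf : Monotone f) :
    sortDesc (fun i => f (p i)) = fun i => f (sortDesc p i) := by
  have h : (fun i => f (p i)) ∘ Tuple.sort p = (fun i => f (p i)) ∘ Tuple.sort (fun i => f (p i)) := by
    rw [Tuple.comp_sort_eq_comp_iff_monotone]
    exact hf.comp (Tuple.monotone_sort p)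
  funext i
  simp only [sortDesc, Function.comp]
  exact (congrFun h i.rev).symm

theorem stmt16 {d : ℕ} (p : Fin d → ℝ) (hp : ∀ i, 0 ≤ p i) (hp1 : ∑ i, p i = 1)
    (t : ℝ) (ht : 0 < t)
    (x : ℝ) (hx : x = (∑ i, min (p i) t)⁻¹) (hx1 : 1 ≤ x) :
    ∀ N : ℕ, topSum (fun i => x * min (p i) t) N ≤ topSum p N := by
  intro N
  set f : ℝ → ℝ := fun a => x * min a t with hf
  have hx0 : 0 < x := lt_of_lt_of_le one_pos hx1
  have hfm : Monotone f := fun a b hab => by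
    exact mul_le_mul_of_nonneg_left (min_le_min hab le_rfl) hx0.le
  set a : Fin d → ℝ := sortDesc p with ha
  have ha0 : ∀ i, 0 ≤ a i := fun i => hp _
  have hsum1 : ∑ i, a i = 1 := by rw [ha, sortDesc_sum, hp1]
  -- sum of f ∘ p is 1
  have hs0 : (∑ i, min (p i) t) ≠ 0 := by
    intro h
    rw [h, inv_zero] at hx
    exact absurd (hx ▸ hx1) (by norm_num)
  have hfsum1 : ∑ i, f (a i) = 1 := by
    have : ∑ i, f (a i) = ∑ i, f (p i) := by
      rw [← sortDesc_sum (fun i => f (p i)), sortDesc_comp_mono p f hfm]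
    rw [this]
    simp only [hf, ← Finset.mul_sum, hx]
    exact inv_mul_cancel₀ hs0
  have hts : topSum (fun i => x * min (p i) t) N = ∑ i ∈ Finset.univ.filter (fun i : Fin d => (i : ℕ) < N), f (a i) := by
    unfold topSum
    rw [show sortDesc (fun i => x * min (p i) t) = fun i => f (a i) from
      sortDesc_comp_mono p f hfm]
  rw [hts]
  show _ ≤ ∑ i ∈ Finset.univ.filter (fun i : Fin d => (i : ℕ) < N), a i
  by_cases hC : ∀ i : Fin d, (i : ℕ) < N → x * t ≤ a i
  · apply Finset.sum_le_sum
    intro i hi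
    have hai := hC i (Finset.mem_filter.mp hi).2
    have hta : t ≤ a i := le_trans (le_mul_of_one_le_left ht.le hx1) hai
    simp only [hf, min_eq_right hta]
    exact hai
  · push_neg at hC
    obtain ⟨i₀, hi₀N, hi₀⟩ := hC
    -- on complement, a j ≤ f (a j)
    have hcompl : ∀ j : Fin d, ¬ ((j : ℕ) < N) → a j ≤ f (a j) := by
      intro j hjN
      have hij : i₀ ≤ j := by
        rw [Fin.le_def]; omega
      have haj : a j < x * t := lt_of_le_of_lt (sortDesc_anti p hij) hi₀
      rcases le_or_gt (a j) t with h | h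
      · simpa [hf, min_eq_left h] using le_mul_of_one_le_left (ha0 j) hx1
      · simpa [hf, min_eq_right h.le] using haj.le
    have key := Finset.sum_filter_add_sum_filter_not Finset.univ (fun i : Fin d => (i : ℕ) < N) a
    have key2 := Finset.sum_filter_add_sum_filter_not Finset.univ (fun i : Fin d => (i : ℕ) < N) (fun i => f (a i))
    rw [hsum1] at key
    rw [hfsum1] at key2
    have hle : ∑ i ∈ Finset.univ.filter (fun i : Fin d => ¬ (i : ℕ) < N), a i
        ≤ ∑ i ∈ Finset.univ.filter (fun i : Fin d => ¬ (i : ℕ) < N), f (a i) :=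
      Finset.sum_le_sum fun i hi => hcompl i (Finset.mem_filter.mp hi).2
    linarith
end
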